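/- Let n ≥ 1 and let G be a subgroup of the group of surjective self-isometries of the Euclidean space ℝⁿ (EuclideanSpace ℝ (Fin n)) whose natural action on ℝⁿ is properly discontinuous and cocompact (the orbit space, with the quotient topology, is compact). If G is nilpotent as a group, then every element g ∈ G is a translation: there exists v ∈ ℝⁿ with g(x) = x + v for all x. -/

import Mathlib

/-- The natural action of the isometry group of a space on the space. -/
instance isometryEquivMulAction {X : Type*} [PseudoEMetricSpace X] : MulAction (X ≃ᵢ X) X where
  smul e x := e x
  one_smul _ := rfl
  mul_smul _ _ _ := rfl

open scoped RealInnerProductSpace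

section Aux

variable {E : Type*} [NormedAddCommGroup E] [InnerProductSpace ℝ E]

/-- Affine expansion of an isometry of a real inner product space. -/
lemma aux_apply (e : E ≃ᵢ E) (x : E) :
    e x = e.toRealLinearIsometryEquiv x + e 0 := by
  rw [IsometryEquiv.toRealLinearIsometryEquiv_apply, sub_add_cancel]

lemma aux_sub (e : E ≃ᵢ E) (y v : E) :
    e (y - v) = e y - e.toRealLinearIsometryEquiv v := by
  rw [aux_apply e (y - v), aux_apply e y, map_sub]; abel

/-- A linear isometry whose "defect" at `v` is fixed must fix `v`. -/
lemma aux_sq (A : E ≃ₗᵢ[ℝ] E) (v : E) (h : A (A v - v) = A v - v) : A v = v := by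
  have h1 : ⟪A v, A v - v⟫ = ⟪v, A v - v⟫ := by
    calc ⟪A v, A v - v⟫ = ⟪A v, A (A v - v)⟫ := by rw [h]
      _ = ⟪v, A v - v⟫ := A.inner_map_map v (A v - v)
  have h0 : ⟪A v - v, A v - v⟫ = 0 := by
    rw [inner_sub_left, h1, sub_self]
  have := inner_self_eq_zero.mp h0
  rwa [sub_eq_zero] at this

variable (G : Subgroup (E ≃ᵢ E))

/-- The set of translation vectors of elements of the `k`-th upper central series term
that happen to be translations. -/
def transSet (k : ℕ) : Set E :=
  {v | ∃ g : G, g ∈ Subgroup.upperCentralSeries G k ∧ ∀ x, (g : E ≃ᵢ E) x = x + v}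

/-- Every rotation part of an element of `G` fixes every vector in `transSet G k`. -/
lemma fixL : ∀ k (h : G) (v : E), v ∈ transSet G k →
    (h : E ≃ᵢ E).toRealLinearIsometryEquiv v = v := by
  intro k
  induction k with
  | zero =>
    rintro h v ⟨g, hg0, hgv⟩
    rw [upperCentralSeries_zero, Subgroup.mem_bot] at hg0
    have h0 : (0 : E) = 0 + v := by
      have := hgv 0
      rw [hg0] at this
      simpa using this
    have hv : v = 0 := by simpa using h0.symm
    simp [hv]
  | succ k ih =>
    rintro h v ⟨g, hg, hgv⟩
    set A := (h : E ≃ᵢ E).toRealLinearIsometryEquiv with hA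
    set c : G := g * h * g⁻¹ * h⁻¹ with hc
    have hck : c ∈ upperCentralSeries G k := mem_upperCentralSeries_succ_iff.mp hg h
    have hginv : ∀ x : E, ((g⁻¹ : G) : E ≃ᵢ E) x = x - v := by
      intro x
      have h1 : (g : E ≃ᵢ E) (x - v) = x := by rw [hgv]; abel
      have h2 : ((g⁻¹ : G) : E ≃ᵢ E) ((g : E ≃ᵢ E) (x - v)) = x - v := by
        rw [show ((g⁻¹ : G) : E ≃ᵢ E) = ((g : G) : E ≃ᵢ E)⁻¹ by simp]
        exact IsometryEquiv.inv_apply_self _ _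
      rwa [h1] at h2
    have hctrans : ∀ x : E, (c : E ≃ᵢ E) x = x + (v - A v) := by
      intro x
      have e1 : (c : E ≃ᵢ E) x
          = (g : E ≃ᵢ E) ((h : E ≃ᵢ E) (((g⁻¹ : G) : E ≃ᵢ E) (((h⁻¹ : G) : E ≃ᵢ E) x))) := by
        rw [hc]
        push_cast
        rfl
      rw [e1, hginv, aux_sub, hgv]
      have h3 : (h : E ≃ᵢ E) (((h⁻¹ : G) : E ≃ᵢ E) x) = x := by
        rw [show ((h⁻¹ : G) : E ≃ᵢ E) = ((h : G) : E ≃ᵢ E)⁻¹ by simp]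
        exact IsometryEquiv.apply_inv_self _ _
      rw [h3, ← hA]
      abel
    have hwL : v - A v ∈ transSet G k := ⟨c, hck, hctrans⟩
    have hw := ih h (v - A v) hwL
    rw [← hA] at hw
    apply aux_sq
    have h1 : A v - v = -(v - A v) := by abel
    rw [h1, map_neg, hw]

/-- Main induction: given a coarsely dense orbit, every element of the upper central series is
a translation. -/
lemma mainTrans [FiniteDimensional ℝ E] (R : ℝ)
    (hR : ∀ x : E, ∃ h : G, ‖x - (h : E ≃ᵢ E) 0‖ ≤ R) :
    ∀ k (g : G), g ∈ Subgroup.upperCentralSeries G k →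
      ∀ x, (g : E ≃ᵢ E) x = x + (g : E ≃ᵢ E) 0 := by
  intro k
  induction k with
  | zero =>
    intro g hg0 x
    rw [upperCentralSeries_zero, Subgroup.mem_bot] at hg0
    subst hg0
    simp
  | succ k ih =>
    intro g hg x
    set A := ((g : G) : E ≃ᵢ E).toRealLinearIsometryEquiv with hA
    set a := ((g : G) : E ≃ᵢ E) 0 with ha
    -- the commutator relation
    have hrel : ∀ h : G,
        A ((h : E ≃ᵢ E) 0) - (h : E ≃ᵢ E) 0
          - ((h : E ≃ᵢ E).toRealLinearIsometryEquiv a - a) ∈ transSet G k := by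
      intro h
      set c : G := g * h * g⁻¹ * h⁻¹ with hc
      have hck : c ∈ upperCentralSeries G k := mem_upperCentralSeries_succ_iff.mp hg h
      have hctrans := ih c hck
      have hgrp : c * (h * g) = g * h := by rw [hc]; group
      have happ : (g : E ≃ᵢ E) ((h : E ≃ᵢ E) 0)
          = (c : E ≃ᵢ E) ((h : E ≃ᵢ E) ((g : E ≃ᵢ E) 0)) := by
        have := congrArg (fun z : G => ((z : G) : E ≃ᵢ E) 0) hgrp
        simpa [IsometryEquiv.mul_apply] using this.symm
      set b := (h : E ≃ᵢ E) 0 with hb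
      set B := (h : E ≃ᵢ E).toRealLinearIsometryEquiv with hB
      have e1 : (g : E ≃ᵢ E) b = A b + a := aux_apply _ _
      have e2 : (c : E ≃ᵢ E) ((h : E ≃ᵢ E) a) = (h : E ≃ᵢ E) a + (c : E ≃ᵢ E) 0 :=
        hctrans _
      have e3 : (h : E ≃ᵢ E) a = B a + b := aux_apply _ _
      rw [← ha] at happ
      have e4 : A b + a = B a + b + (c : E ≃ᵢ E) 0 := by
        have h5 : (c : E ≃ᵢ E) ((h : E ≃ᵢ E) a) = B a + b + (c : E ≃ᵢ E) 0 := by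
          rw [e2, e3]
        rw [← e1, ← h5, happ]
      have e5 : A b - b - (B a - a) = (c : E ≃ᵢ E) 0 := by
        have h6 : A b - b - (B a - a) = (A b + a) - (B a + b) := by abel
        rw [h6, e4]
        abel
      rw [e5]
      exact ⟨c, hck, hctrans⟩
    set V := Submodule.span ℝ (transSet G k) with hV
    haveI : CompleteSpace V := FiniteDimensional.complete ℝ V
    have hRnn : 0 ≤ R := by
      obtain ⟨h0, hh0⟩ := hR 0
      exact le_trans (norm_nonneg _) hh0
    set C := 2 * R + 2 * ‖a‖ with hC
    have hCnn : 0 ≤ C := by positivity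
    have hbound : ∀ y : E,
        ‖(A y - y) - (V.orthogonalProjectionOnto (A y - y) : E)‖ ≤ C := by
      intro y
      obtain ⟨h, hh⟩ := hR y
      set b := (h : E ≃ᵢ E) 0 with hb
      set B := (h : E ≃ᵢ E).toRealLinearIsometryEquiv with hB
      have hmem : A b - b - (B a - a) ∈ V := Submodule.subset_span (hrel h)
      have hmin : ‖(A y - y) - (V.orthogonalProjectionOnto (A y - y) : E)‖
          ≤ ‖(A y - y) - (A b - b - (B a - a))‖ := by
        rw [Submodule.coe_orthogonalProjectionOnto_apply, Submodule.starProjection_minimal]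
        exact ciInf_le ⟨0, by rintro _ ⟨z, rfl⟩; exact norm_nonneg _⟩
          (⟨A b - b - (B a - a), hmem⟩ : V)
      refine hmin.trans ?_
      have e1 : (A y - y) - (A b - b - (B a - a)) = (A (y - b) - (y - b)) + (B a - a) := by
        rw [map_sub]; abel
      rw [e1]
      calc ‖(A (y - b) - (y - b)) + (B a - a)‖
          ≤ ‖A (y - b) - (y - b)‖ + ‖B a - a‖ := norm_add_le _ _
        _ ≤ (‖A (y - b)‖ + ‖y - b‖) + (‖B a‖ + ‖a‖) := by
            gcongr <;> exact norm_sub_le _ _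
        _ = 2 * ‖y - b‖ + 2 * ‖a‖ := by rw [A.norm_map, B.norm_map]; ring
        _ ≤ 2 * R + 2 * ‖a‖ := by gcongr
    have hAV : ∀ y : E, A y - y ∈ V := by
      intro y
      set d : E → E := fun z => (A z - z) - (V.orthogonalProjectionOnto (A z - z) : E) with hd
      have hdsmul : ∀ (t : ℝ) (z : E), d (t • z) = t • d z := by
        intro t z
        have h1 : A (t • z) - t • z = t • (A z - z) := by rw [map_smul, smul_sub]
        calc d (t • z)
            = (A (t • z) - t • z) - (V.orthogonalProjectionOnto (A (t • z) - t • z) : E) := rfl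
          _ = t • (A z - z) - (V.orthogonalProjectionOnto (t • (A z - z)) : E) := by rw [h1]
          _ = t • (A z - z) - t • (V.orthogonalProjectionOnto (A z - z) : E) := by
              rw [map_smul]; rfl
          _ = t • d z := by rw [← smul_sub]
      have hdz : d y = 0 := by
        by_contra hne
        have hpos : 0 < ‖d y‖ := norm_pos_iff.mpr hne
        set t := (C + 1) / ‖d y‖ with ht
        have htpos : 0 < t := by positivity
        have hb := hbound (t • y)
        rw [show (A (t • y) - t • y) - (V.orthogonalProjectionOnto (A (t • y) - t • y) : E)
              = d (t • y) from rfl, hdsmul, norm_smul, Real.norm_eq_abs,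
          abs_of_pos htpos, ht, div_mul_cancel₀ _ (ne_of_gt hpos)] at hb
        linarith
      have : A y - y = (V.orthogonalProjectionOnto (A y - y) : E) := by
        have := sub_eq_zero.mp hdz
        exact this
      rw [this]
      exact Submodule.coe_mem _
    have hfix : ∀ u ∈ V, A u = u := by
      intro u hu
      refine Submodule.span_induction (p := fun z _ => A z = z) ?_ ?_ ?_ ?_ hu
      · intro z hz
        exact fixL G k g z hz
      · exact map_zero A
      · intro z w _ _ hz hw
        rw [map_add, hz, hw]
      · intro r z _ hz
        rw [map_smul, hz]
    have hAx : A x = x := by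
      apply aux_sq
      exact hfix _ (hAV x)
    calc ((g : G) : E ≃ᵢ E) x = A x + a := aux_apply _ _
      _ = x + a := by rw [hAx]

end Aux

/-- The key claim in the proof of Lemma 2.7: a nilpotent group of isometries of `ℝⁿ` acting
properly discontinuously and cocompactly consists entirely of translations. -/
theorem stmt6 (n : ℕ) (hn : 1 ≤ n)
    (G : Subgroup (EuclideanSpace ℝ (Fin n) ≃ᵢ EuclideanSpace ℝ (Fin n)))
    (hdisc : ProperlyDiscontinuousSMul G (EuclideanSpace ℝ (Fin n)))
    (hcocompact : CompactSpace (Quotient (MulAction.orbitRel G (EuclideanSpace ℝ (Fin n)))))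
    (hnil : Group.IsNilpotent G) :
    ∀ g : G, ∃ v : EuclideanSpace ℝ (Fin n),
      ∀ x : EuclideanSpace ℝ (Fin n),
        (g : EuclideanSpace ℝ (Fin n) ≃ᵢ EuclideanSpace ℝ (Fin n)) x = x + v := by
  classical
  set E := EuclideanSpace ℝ (Fin n) with hE
  -- coarse density of an orbit, from cocompactness
  have hdense : ∃ R : ℝ, ∀ x : E, ∃ h : G, ‖x - (h : E ≃ᵢ E) 0‖ ≤ R := by
    set q : E → Quotient (MulAction.orbitRel G E) := Quotient.mk _ with hq
    set U : ℕ → Set (Quotient (MulAction.orbitRel G E)) :=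
      fun m => q '' Metric.ball 0 m with hU
    have hsmul : ∀ (g : G) (x : E), g • x = (g : E ≃ᵢ E) x := fun _ _ => rfl
    have hUopen : ∀ m, IsOpen (U m) := by
      intro m
      have hpre : q ⁻¹' (U m) = ⋃ (g : G), (fun x => (g : E ≃ᵢ E) x) ⁻¹' (Metric.ball 0 m) := by
        ext x
        simp only [Set.mem_preimage, Set.mem_iUnion, Set.mem_image, hU]
        constructor
        · rintro ⟨y, hy, hxy⟩
          obtain ⟨gg, hgg0⟩ := Quotient.exact hxy
          have hgg' : ((gg : G) : E ≃ᵢ E) x = y := hgg0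
          exact ⟨gg, by rw [hgg']; exact hy⟩
        · rintro ⟨gg, hgg⟩
          refine ⟨(gg : E ≃ᵢ E) x, hgg, ?_⟩
          have hrel0 : (MulAction.orbitRel (↥G) E).r ((gg : E ≃ᵢ E) x) x := ⟨gg, rfl⟩
          exact Quotient.sound hrel0
      have : IsOpen (q ⁻¹' (U m)) := by
        rw [hpre]
        exact isOpen_iUnion fun g =>
          ((g : E ≃ᵢ E).continuous.isOpen_preimage _ Metric.isOpen_ball)
      exact (isQuotientMap_quotient_mk' (s := MulAction.orbitRel (↥G) E)).isOpen_preimage.mp this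
    have hcover : Set.univ ⊆ ⋃ m, U m := by
      intro y _
      obtain ⟨x, rfl⟩ := Quotient.exists_rep y
      obtain ⟨m, hm⟩ := exists_nat_gt ‖x‖
      refine Set.mem_iUnion.mpr ⟨m, ⟨x, ?_, rfl⟩⟩
      rw [Metric.mem_ball, dist_zero_right]
      exact hm
    obtain ⟨t, ht⟩ := isCompact_univ.elim_finite_subcover U hUopen hcover
    set M : ℕ := t.sup id + 1 with hM
    have hsub : ∀ i ∈ t, U i ⊆ U M := by
      intro i hi
      apply Set.image_mono
      apply Metric.ball_subset_ball
      have : i ≤ M := le_trans (Finset.le_sup (f := id) hi) (Nat.le_succ _)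
      exact_mod_cast this
    refine ⟨M, fun x => ?_⟩
    have hx : q x ∈ U M := by
      have := ht (Set.mem_univ (q x))
      rw [Set.mem_iUnion₂] at this
      obtain ⟨i, hi, hxi⟩ := this
      exact hsub i hi hxi
    obtain ⟨x', hx', hqx⟩ := hx
    obtain ⟨gg, hgg0⟩ := Quotient.exact hqx
    have hgg : ((gg : G) : E ≃ᵢ E) x = x' := hgg0
    refine ⟨gg⁻¹, ?_⟩
    have h1 : ((gg⁻¹ : G) : E ≃ᵢ E) x' = x := by
      rw [show ((gg⁻¹ : G) : E ≃ᵢ E) = ((gg : G) : E ≃ᵢ E)⁻¹ by simp, ← hgg]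
      exact IsometryEquiv.inv_apply_self _ _
    have h2 : ‖x - ((gg⁻¹ : G) : E ≃ᵢ E) 0‖
        = dist (((gg⁻¹ : G) : E ≃ᵢ E) x') (((gg⁻¹ : G) : E ≃ᵢ E) 0) := by
      rw [h1, dist_eq_norm]
    rw [h2, IsometryEquiv.dist_eq, dist_zero_right]
    have h3 := Metric.mem_ball.mp hx'
    rw [dist_zero_right] at h3
    exact h3.le
  obtain ⟨R, hR⟩ := hdense
  obtain ⟨k, hk⟩ := hnil.nilpotent'
  intro g
  refine ⟨(g : E ≃ᵢ E) 0, ?_⟩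
  exact mainTrans G R hR k g (hk ▸ Subgroup.mem_top g)
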